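/- arXiv:2407.11512 — 3 statements merged into one kernel-verified Lean document; each statement's English description precedes it below -/
import Mathlib

section
/- Let D̂ ⊂ ℝ^d (d ∈ {2,3}) be a bounded open set and 𝔗 a compact subset of Lip_b(D̂;ℝ^d) such that every r ∈ 𝔗 is injective and satisfies ‖r(x)−r(y)‖ ≥ c_r‖x−y‖ for all x,y ∈ D̂ and some c_r > 0. Then there exist δ = δ(𝔗) > 0 and ζ(δ,𝔗) > 0 such that for every r in 𝔗_δ (the open δ-neighborhood of 𝔗 in Lip_b(D̂;ℂ^d)) and every pair x,y ∈ D̂ with x ≠ y, Re[(r(x)−r(y))·(r(x)−r(y))] ≥ ζ(δ,𝔗)·‖x−y‖², where w·w := Σᵢ wᵢ² is the complex-bilinear dot product on ℂ^d. -/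
noncomputable section

open MeasureTheory Complex Metric Set

set_option linter.unusedSectionVars false

/-- The complex-bilinear dot product `w · w = ∑ i, wᵢ²` on `ℂ^d`. -/
def cdot {d : ℕ} (w : EuclideanSpace ℂ (Fin d)) : ℂ := ∑ i, w i * w i

/-- The principal branch of the complex square root. -/
def csqrt (z : ℂ) : ℂ := z ^ (1 / 2 : ℂ)

/-- The space of bounded Lipschitz maps from a metric space `α` into a normed space `F`,
normed by `‖f‖ = sup_x ‖f x‖ + Lip(f)`. -/
structure LipBdd (α : Type*) [MetricSpace α] (F : Type*) [NormedAddCommGroup F] where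
  toFun : α → F
  bdd' : ∃ C : ℝ, ∀ x, ‖toFun x‖ ≤ C
  lip' : ∃ K : ℝ, ∀ x y, dist (toFun x) (toFun y) ≤ K * dist x y

namespace LipBdd

variable {α : Type*} [MetricSpace α] {F : Type*} [NormedAddCommGroup F] [NormedSpace ℂ F]

instance : FunLike (LipBdd α F) α F where
  coe f := f.toFun
  coe_injective := by rintro ⟨f, _, _⟩ ⟨g, _, _⟩ h; simpa using h

@[ext] lemma ext {f g : LipBdd α F} (h : ∀ x, f x = g x) : f = g := DFunLike.ext f g h

/-- The least Lipschitz constant of a bounded Lipschitz map. -/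
def lipConst (f : LipBdd α F) : ℝ :=
  sInf {K : ℝ | 0 ≤ K ∧ ∀ x y, dist (f x) (f y) ≤ K * dist x y}

lemma bddAbove_range_norm (f : LipBdd α F) : BddAbove (Set.range fun x => ‖f x‖) := by
  obtain ⟨C, hC⟩ := f.bdd'
  exact ⟨C, by rintro s ⟨x, rfl⟩; exact hC x⟩

lemma lipSet_nonempty (f : LipBdd α F) :
    {K : ℝ | 0 ≤ K ∧ ∀ x y, dist (f x) (f y) ≤ K * dist x y}.Nonempty := by
  obtain ⟨K, hK⟩ := f.lip'
  exact ⟨max K 0, le_max_right _ _, fun x y =>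
    (hK x y).trans (mul_le_mul_of_nonneg_right (le_max_left _ _) dist_nonneg)⟩

lemma lipSet_bddBelow (f : LipBdd α F) :
    BddBelow {K : ℝ | 0 ≤ K ∧ ∀ x y, dist (f x) (f y) ≤ K * dist x y} :=
  ⟨0, fun _ hK => hK.1⟩

lemma lipConst_nonneg (f : LipBdd α F) : 0 ≤ lipConst f :=
  le_csInf (lipSet_nonempty f) fun _ hK => hK.1

lemma dist_le_lipConst (f : LipBdd α F) (x y : α) :
    dist (f x) (f y) ≤ lipConst f * dist x y := by
  rcases eq_or_lt_of_le (dist_nonneg : (0:ℝ) ≤ dist x y) with h | h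
  · obtain ⟨K, hK0, hK⟩ := lipSet_nonempty f
    have h2 := hK x y
    rw [← h] at h2 ⊢
    simpa using h2
  · rw [← div_le_iff₀ h]
    refine le_csInf (lipSet_nonempty f) fun K hK => ?_
    rw [div_le_iff₀ h]
    exact hK.2 x y

instance : Zero (LipBdd α F) :=
  ⟨⟨fun _ => 0, ⟨0, fun x => by simp⟩, ⟨0, fun x y => by simp⟩⟩⟩

@[simp] lemma coe_zero : ⇑(0 : LipBdd α F) = fun _ => (0 : F) := rfl

instance : Add (LipBdd α F) :=
  ⟨fun f g =>
    ⟨fun x => f x + g x, by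
      obtain ⟨Cf, hCf⟩ := f.bdd'
      obtain ⟨Cg, hCg⟩ := g.bdd'
      exact ⟨Cf + Cg, fun x => (norm_add_le _ _).trans (add_le_add (hCf x) (hCg x))⟩, by
      obtain ⟨Kf, hKf⟩ := f.lip'
      obtain ⟨Kg, hKg⟩ := g.lip'
      refine ⟨Kf + Kg, fun x y => (dist_add_add_le _ _ _ _).trans ?_⟩
      rw [add_mul]
      exact add_le_add (hKf x y) (hKg x y)⟩⟩

@[simp] lemma coe_add (f g : LipBdd α F) : ⇑(f + g) = fun x => f x + g x := rfl

instance : Neg (LipBdd α F) :=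
  ⟨fun f =>
    ⟨fun x => -f x, by
      obtain ⟨Cf, hCf⟩ := f.bdd'
      exact ⟨Cf, fun x => by have h : ‖f x‖ ≤ Cf := hCf x; simpa using h⟩, by
      obtain ⟨Kf, hKf⟩ := f.lip'
      exact ⟨Kf, fun x y => by
        have h : dist (f x) (f y) ≤ Kf * dist x y := hKf x y; simpa [dist_neg_neg] using h⟩⟩⟩

@[simp] lemma coe_neg (f : LipBdd α F) : ⇑(-f) = fun x => -f x := rfl

instance : SMul ℂ (LipBdd α F) :=
  ⟨fun c f =>
    ⟨fun x => c • f x, by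
      obtain ⟨Cf, hCf⟩ := f.bdd'
      refine ⟨‖c‖ * Cf, fun x => ?_⟩
      rw [norm_smul]
      exact mul_le_mul_of_nonneg_left (hCf x) (norm_nonneg c), by
      obtain ⟨Kf, hKf⟩ := f.lip'
      refine ⟨‖c‖ * Kf, fun x y => ?_⟩
      rw [dist_smul₀, mul_assoc]
      exact mul_le_mul_of_nonneg_left (hKf x y) (norm_nonneg c)⟩⟩

@[simp] lemma coe_smul (c : ℂ) (f : LipBdd α F) : ⇑(c • f) = fun x => c • f x := rfl

instance : AddCommGroup (LipBdd α F) where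
  add := (· + ·)
  zero := 0
  neg := Neg.neg
  add_assoc f g h := by ext x; exact add_assoc _ _ _
  zero_add f := by ext x; exact zero_add _
  add_zero f := by ext x; exact add_zero _
  neg_add_cancel f := by ext x; exact neg_add_cancel _
  add_comm f g := by ext x; exact add_comm _ _
  nsmul := nsmulRec
  zsmul := zsmulRec

instance : Module ℂ (LipBdd α F) where
  smul := (· • ·)
  one_smul f := by ext x; exact one_smul _ _
  mul_smul a b f := by ext x; exact mul_smul _ _ _
  smul_zero a := by ext x; exact smul_zero _
  smul_add a f g := by ext x; exact smul_add _ _ _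
  add_smul a b f := by ext x; exact add_smul _ _ _
  zero_smul f := by ext x; exact zero_smul _ _

/-- The norm `‖f‖ = sup_x ‖f x‖ + Lip(f)` on bounded Lipschitz maps. -/
noncomputable instance : NormedAddCommGroup (LipBdd α F) :=
  AddGroupNorm.toNormedAddCommGroup
    { toFun := fun f => (⨆ x, ‖f x‖) + lipConst f
      map_zero' := by
        have h1 : (⨆ x : α, ‖(0 : LipBdd α F) x‖) = 0 := by
          simp only [coe_zero, norm_zero]
          rcases isEmpty_or_nonempty α with h | h
          · exact Real.iSup_of_isEmpty _
          · exact ciSup_const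
        have h2 : lipConst (0 : LipBdd α F) = 0 := by
          unfold lipConst
          have hset : {K : ℝ | 0 ≤ K ∧ ∀ x y : α,
              dist ((0 : LipBdd α F) x) ((0 : LipBdd α F) y) ≤ K * dist x y} = Set.Ici 0 := by
            ext K
            simp only [Set.mem_setOf_eq, coe_zero, dist_self, Set.mem_Ici]
            exact ⟨fun h => h.1, fun h => ⟨h, fun x y => mul_nonneg h dist_nonneg⟩⟩
          rw [hset, csInf_Ici]
        simp only [h1, h2, add_zero]
      add_le' := by
        intro f g
        have hsup : (⨆ x : α, ‖(f + g) x‖) ≤ (⨆ x, ‖f x‖) + ⨆ x, ‖g x‖ := by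
          refine Real.iSup_le (fun x => ?_)
            (add_nonneg (Real.iSup_nonneg fun x => norm_nonneg _)
              (Real.iSup_nonneg fun x => norm_nonneg _))
          calc ‖f x + g x‖ ≤ ‖f x‖ + ‖g x‖ := norm_add_le _ _
            _ ≤ _ := add_le_add (le_ciSup (bddAbove_range_norm f) x)
                  (le_ciSup (bddAbove_range_norm g) x)
        have hlip : lipConst (f + g) ≤ lipConst f + lipConst g := by
          refine csInf_le (lipSet_bddBelow _)
            ⟨add_nonneg (lipConst_nonneg f) (lipConst_nonneg g), fun x y => ?_⟩
          calc dist ((f + g) x) ((f + g) y)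
              ≤ dist (f x) (f y) + dist (g x) (g y) := dist_add_add_le _ _ _ _
            _ ≤ lipConst f * dist x y + lipConst g * dist x y :=
                add_le_add (dist_le_lipConst f x y) (dist_le_lipConst g x y)
            _ = (lipConst f + lipConst g) * dist x y := (add_mul _ _ _).symm
        linarith
      neg' := by
        intro f
        have h1 : (⨆ x : α, ‖(-f) x‖) = ⨆ x, ‖f x‖ := by
          simp only [coe_neg, norm_neg]
        have h2 : lipConst (-f) = lipConst f := by
          unfold lipConst
          congr 1
          ext K
          simp only [Set.mem_setOf_eq, coe_neg, dist_neg_neg]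
        simp only [h1, h2]
      eq_zero_of_map_eq_zero' := by
        intro f hf
        have h1 : 0 ≤ ⨆ x : α, ‖f x‖ := Real.iSup_nonneg fun x => norm_nonneg _
        have h2 : 0 ≤ lipConst f := lipConst_nonneg f
        have hsup : (⨆ x : α, ‖f x‖) = 0 := by linarith
        ext x
        have hle := le_ciSup (bddAbove_range_norm f) x
        rw [hsup] at hle
        have hx : f x = 0 := norm_le_zero_iff.mp hle
        simpa using hx }

noncomputable instance : NormedSpace ℂ (LipBdd α F) where
  norm_smul_le := by
    intro c f
    have hsup : (⨆ x : α, ‖(c • f) x‖) ≤ ‖c‖ * ⨆ x, ‖f x‖ := by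
      refine Real.iSup_le (fun x => ?_)
        (mul_nonneg (norm_nonneg _) (Real.iSup_nonneg fun x => norm_nonneg _))
      calc ‖(c • f) x‖ = ‖c‖ * ‖f x‖ := norm_smul _ _
        _ ≤ _ := mul_le_mul_of_nonneg_left (le_ciSup (bddAbove_range_norm f) x) (norm_nonneg c)
    have hlip : lipConst (c • f) ≤ ‖c‖ * lipConst f := by
      refine csInf_le (lipSet_bddBelow _)
        ⟨mul_nonneg (norm_nonneg _) (lipConst_nonneg f), fun x y => ?_⟩
      calc dist ((c • f) x) ((c • f) y) = ‖c‖ * dist (f x) (f y) := dist_smul₀ _ _ _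
        _ ≤ ‖c‖ * (lipConst f * dist x y) :=
            mul_le_mul_of_nonneg_left (dist_le_lipConst f x y) (norm_nonneg c)
        _ = ‖c‖ * lipConst f * dist x y := (mul_assoc _ _ _).symm
    have hn : ‖c • f‖ = (⨆ x : α, ‖(c • f) x‖) + lipConst (c • f) := rfl
    have hn' : ‖f‖ = (⨆ x : α, ‖f x‖) + lipConst f := rfl
    rw [hn, hn', mul_add]
    exact add_le_add hsup hlip

end LipBdd

/-- The open `δ`-neighborhood of a set `T` in a normed space; for
`T ⊆ Lip_b(D̂;ℝ^d) ⊆ Lip_b(D̂;ℂ^d)` this is the complex neighborhood `𝔗_δ`. -/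
def cnbhd {X : Type*} [NormedAddCommGroup X] (T : Set X) (δ : ℝ) : Set X :=
  {r : X | ∃ r' ∈ T, ‖r - r'‖ < δ}

/-- A complex-vector-valued map is real-valued if all its values have vanishing
imaginary parts; `Lip_b(D̂;ℝ^d)` is identified with the set of real-valued elements of
`Lip_b(D̂;ℂ^d)`. -/
def IsRealValued {α : Type*} [MetricSpace α] {d : ℕ}
    (f : LipBdd α (EuclideanSpace ℂ (Fin d))) : Prop :=
  ∀ x, ∀ i, (f x i).im = 0

/-! A lower bound `c_r ‖x - y‖ ≤ ‖r x - r y‖` survives, with constant `c_r / 2`, on the ball of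
radius `c_r / 2` around `r`, so compactness of `𝔗` yields one uniform constant `c`. Near
`r' ∈ 𝔗` write `r x - r y = u + v` with `u = r' x - r' y` real and `v` the perturbation; then
`Re (w · w) = ‖Re w‖² - ‖Im w‖²` gives `Re ((u + v) · (u + v)) ≥ ‖u‖² / 2 - ‖v‖²`, and
`‖u‖ ≥ c ‖x - y‖`, `‖v‖ ≤ (c / 4) ‖x - y‖` leave `ζ = c² / 4`. -/

open Filter Topology

namespace LipBdd

variable {α : Type*} [MetricSpace α] {F : Type*} [NormedAddCommGroup F] [NormedSpace ℂ F]

@[simp] lemma coe_sub (f g : LipBdd α F) : ⇑(f - g) = fun x => f x - g x := by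
  funext x
  simp [sub_eq_add_neg]

lemma lipConst_le_norm (f : LipBdd α F) : lipConst f ≤ ‖f‖ :=
  le_add_of_nonneg_left (Real.iSup_nonneg fun _ => norm_nonneg _)

lemma norm_apply_sub_apply_le (f : LipBdd α F) (x y : α) : ‖f x - f y‖ ≤ ‖f‖ * dist x y :=
  (dist_eq_norm (f x) (f y) ▸ f.dist_le_lipConst x y).trans
    (mul_le_mul_of_nonneg_right (lipConst_le_norm f) dist_nonneg)

lemma sub_dist_mul_dist_le_norm_sub {r s : LipBdd α F} {c : ℝ}
    (hr : ∀ x y, c * dist x y ≤ ‖r x - r y‖) (x y : α) :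
    (c - dist s r) * dist x y ≤ ‖s x - s y‖ := by
  have hpert : ‖(r - s) x - (r - s) y‖ ≤ dist s r * dist x y := by
    rw [dist_comm, dist_eq_norm]
    exact norm_apply_sub_apply_le _ x y
  have hdiff : r x - r y - ((r - s) x - (r - s) y) = s x - s y := by
    simp only [coe_sub]
    abel
  calc (c - dist s r) * dist x y = c * dist x y - dist s r * dist x y := sub_mul _ _ _
    _ ≤ ‖r x - r y‖ - ‖(r - s) x - (r - s) y‖ := sub_le_sub (hr x y) hpert
    _ ≤ ‖s x - s y‖ := hdiff ▸ norm_sub_norm_le _ _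

theorem _root_.IsCompact.exists_pos_forall_mul_dist_le {T : Set (LipBdd α F)}
    (hT : IsCompact T) (h : ∀ r ∈ T, ∃ c : ℝ, 0 < c ∧ ∀ x y, c * dist x y ≤ ‖r x - r y‖) :
    ∃ c > (0 : ℝ), ∀ r ∈ T, ∀ x y, c * dist x y ≤ ‖r x - r y‖ := by
  have hnear : ∀ᶠ c in 𝓝 (0 : ℝ), ∀ r ∈ T, ∀ x y, c * dist x y ≤ ‖r x - r y‖ := by
    refine hT.eventually_forall_of_forall_eventually fun r hr => ?_
    obtain ⟨c, hc, hcr⟩ := h r hr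
    filter_upwards [prod_mem_nhds (Iio_mem_nhds (half_pos hc)) (ball_mem_nhds r (half_pos hc))]
      with ⟨c', s⟩ ⟨hc', hs⟩ x y
    calc c' * dist x y ≤ (c - dist s r) * dist x y := by
          gcongr
          linarith [mem_ball.mp hs, mem_Iio.mp hc']
      _ ≤ ‖s x - s y‖ := sub_dist_mul_dist_le_norm_sub hcr x y
  exact ((hnear.filter_mono nhdsWithin_le_nhds).and self_mem_nhdsWithin).exists
    (f := 𝓝[>] (0 : ℝ)) |>.imp fun c hc => ⟨hc.2, hc.1⟩

end LipBdd

lemma sq_norm_div_two_sub_le_re_cdot_add {d : ℕ} (u v : EuclideanSpace ℂ (Fin d))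
    (hu : ∀ i, (u i).im = 0) : ‖u‖ ^ 2 / 2 - ‖v‖ ^ 2 ≤ (cdot (u + v)).re := by
  rw [EuclideanSpace.norm_sq_eq, EuclideanSpace.norm_sq_eq, Finset.sum_div,
    ← Finset.sum_sub_distrib, cdot, re_sum]
  refine Finset.sum_le_sum fun i _ => ?_
  simp only [PiLp.add_apply, Complex.sq_norm, normSq_apply, mul_re, add_re, add_im, hu i]
  nlinarith [sq_nonneg ((u i).re + 2 * (v i).re)]

theorem real_part_bilinear_dot_lower_bound_general
    {d : ℕ}
    (Dh : Set (EuclideanSpace ℝ (Fin d)))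
    (T : Set (LipBdd ↥Dh (EuclideanSpace ℂ (Fin d))))
    (hTc : IsCompact T)
    (hTreal : ∀ r ∈ T, IsRealValued r)
    (hTlow : ∀ r ∈ T, ∃ c : ℝ, 0 < c ∧ ∀ x y : ↥Dh, c * dist x y ≤ ‖r x - r y‖) :
    ∃ δ > (0 : ℝ), ∃ ζ > (0 : ℝ), ∀ r ∈ cnbhd T δ, ∀ x y : ↥Dh, x ≠ y →
      ζ * dist x y ^ 2 ≤ (cdot (r x - r y)).re := by
  obtain ⟨c, hc, hlow⟩ := hTc.exists_pos_forall_mul_dist_le hTlow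
  refine ⟨c / 4, by positivity, c ^ 2 / 4, by positivity, ?_⟩
  rintro r ⟨r', hr', hrr'⟩ x y -
  have hreal : ∀ i, ((r' x - r' y) i).im = 0 := fun i => by
    simp [hTreal r' hr' x i, hTreal r' hr' y i]
  have hu : c * dist x y ≤ ‖r' x - r' y‖ := hlow r' hr' x y
  have hv : ‖(r - r') x - (r - r') y‖ ≤ c / 4 * dist x y :=
    (LipBdd.norm_apply_sub_apply_le _ x y).trans (by gcongr)
  have hsplit : r' x - r' y + ((r - r') x - (r - r') y) = r x - r y := by
    simp only [LipBdd.coe_sub]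
    abel
  have key := hsplit ▸ sq_norm_div_two_sub_le_re_cdot_add _ _ hreal
  have hu2 : (c * dist x y) ^ 2 ≤ ‖r' x - r' y‖ ^ 2 := by gcongr
  have hv2 : ‖(r - r') x - (r - r') y‖ ^ 2 ≤ (c / 4 * dist x y) ^ 2 := by gcongr
  nlinarith

/-- Let `D̂ ⊂ ℝ^d` (`d ∈ {2,3}`) be a bounded open set and `𝔗` a compact
set of real-valued bounded Lipschitz transformations, each injective and satisfying
`‖r(x)−r(y)‖ ≥ c_r ‖x−y‖`.  Then there are `δ > 0` and `ζ > 0` such that for every `r` in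
the complex `δ`-neighborhood `𝔗_δ` and all `x ≠ y` in `D̂`,
`Re[(r(x)−r(y))·(r(x)−r(y))] ≥ ζ ‖x−y‖²`. -/
theorem real_part_bilinear_dot_lower_bound
    {d : ℕ} (hd : d = 2 ∨ d = 3)
    (Dh : Set (EuclideanSpace ℝ (Fin d))) (hDo : IsOpen Dh) (hDb : Bornology.IsBounded Dh)
    (T : Set (LipBdd ↥Dh (EuclideanSpace ℂ (Fin d))))
    (hTc : IsCompact T)
    (hTreal : ∀ r ∈ T, IsRealValued r)
    (hTinj : ∀ r ∈ T, Function.Injective ⇑r)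
    (hTlow : ∀ r ∈ T, ∃ c : ℝ, 0 < c ∧ ∀ x y : ↥Dh, c * dist x y ≤ ‖r x - r y‖) :
    ∃ δ > (0 : ℝ), ∃ ζ > (0 : ℝ), ∀ r ∈ cnbhd T δ, ∀ x y : ↥Dh, x ≠ y →
      ζ * dist x y ^ 2 ≤ (cdot (r x - r y)).re :=
  real_part_bilinear_dot_lower_bound_general Dh T hTc hTreal hTlow
end
end

section
/- Let D ⊆ ℝ^d (d ∈ {2,3}) be a bounded open set, X a complex Banach space, 𝔗 ⊆ X compact and δ > 0. Let p : 𝔗_δ × (D×D)* → ℂ satisfy: for each r ∈ 𝔗_δ, (x,y) ↦ p_{r,ℂ}(x,y) is measurable; for each (x,y) ∈ (D×D)*, r ↦ p_{r,ℂ}(x,y) is holomorphic on 𝔗_δ; and |p_{r,ℂ}(x,y)| ≤ C·‖x−y‖^{−ν} uniformly in r ∈ 𝔗_δ, with ν ∈ (0,d). Let χ ∈ C^∞([0,∞)) with χ = 0 on [0,1/2], χ = 1 on [1,∞), 0 ≤ χ ≤ 1. Then for each fixed n ∈ ℕ the map 𝔗_δ ∋ r ↦ p^{(n)}_{r,ℂ}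 ∈ L^∞(D×D), where p^{(n)}_{r,ℂ}(x,y) := p_{r,ℂ}(x,y)·χ(n‖x−y‖^ν), is holomorphic and bounded on 𝔗_δ. -/
noncomputable section

open MeasureTheory Complex

set_option maxHeartbeats 1600000

section helpers
open Metric


lemma keyC {g : ℂ → ℂ} {r M : ℝ} (hr : 0 < r) (hg : DiffContOnCl ℂ g (Metric.ball 0 r))
    (hM : ∀ w ∈ Metric.sphere (0:ℂ) r, ‖g w‖ ≤ M) {t : ℂ} (ht : ‖t‖ < r) :
    ‖g t - g 0 - t * deriv g 0‖ ≤ ‖t‖^2 * M / (r * (r - ‖t‖)) := by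
  have hM0 : 0 ≤ M := le_trans (norm_nonneg _) (hM r (by simp [Real.norm_eq_abs, abs_of_pos hr, Complex.norm_real]))
  have htr : (0:ℝ) < r - ‖t‖ := by linarith
  have ht' : t ∈ ball (0:ℂ) r := mem_ball_zero_iff.2 ht
  have hgc : ContinuousOn g (sphere (0:ℂ) r) :=
    hg.continuousOn_ball.mono sphere_subset_closedBall
  -- integrability of the three pieces
  have hw0 : ∀ w ∈ sphere (0:ℂ) r, w ≠ 0 := by
    intro w hw h0; rw [mem_sphere_zero_iff_norm] at hw; rw [h0] at hw; simp at hw; linarith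
  have hwt : ∀ w ∈ sphere (0:ℂ) r, w ≠ t := by
    intro w hw h0; rw [mem_sphere_zero_iff_norm] at hw; rw [h0] at hw; linarith
  have cont1 : ContinuousOn (fun w => (w - t)⁻¹ • g w) (sphere (0:ℂ) r) :=
    (ContinuousOn.inv₀ (by fun_prop) (fun w hw => sub_ne_zero.2 (hwt w hw))).smul hgc
  have cont2 : ContinuousOn (fun w => (w - 0)⁻¹ • g w) (sphere (0:ℂ) r) :=
    (ContinuousOn.inv₀ (by fun_prop) (fun w hw => sub_ne_zero.2 (hw0 w hw))).smul hgc
  have cont3 : ContinuousOn (fun w => t • ((w - 0) ^ (-2 : ℤ) • g w)) (sphere (0:ℂ) r) := by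
    refine ContinuousOn.smul (continuousOn_const (c := t)) (ContinuousOn.smul (f := fun w : ℂ => (w - 0) ^ (-2 : ℤ)) (fun w hw => ?_) hgc)
    exact ((continuousAt_id.sub continuousAt_const).zpow₀ _ (Or.inl (sub_ne_zero.2 (hw0 w hw)))).continuousWithinAt
  have c1 : CircleIntegrable (fun w => (w - t)⁻¹ • g w) 0 r := cont1.circleIntegrable hr.le
  have c2 : CircleIntegrable (fun w => (w - 0)⁻¹ • g w) 0 r := cont2.circleIntegrable hr.le
  have hA : (∮ w in C(0, r), (w - t)⁻¹ • g w) = (2 * Real.pi * I) • g t :=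
    hg.circleIntegral_sub_inv_smul ht'
  have hB : (∮ w in C(0, r), (w - 0)⁻¹ • g w) = (2 * Real.pi * I) • g 0 :=
    hg.circleIntegral_sub_inv_smul (mem_ball_self hr)
  have hD : deriv g 0 = (2 * Real.pi * I : ℂ)⁻¹ • ∮ w in C(0, r), (w - 0) ^ (-2 : ℤ) • g w :=
    by
      have h := DiffContOnCl.deriv_eq_smul_circleIntegral hr hg
      have e : (fun w => (w - 0) ^ (-2 : ℤ) • g w) = fun w => (1 / (w - 0) ^ 2) • g w := by
        funext w; rw [zpow_neg, one_div, zpow_two, pow_two]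
      rw [e, h, inv_smul_smul₀ (by simp [Real.pi_ne_zero, Complex.I_ne_zero])]
  have hpi : (2 * (Real.pi:ℂ) * I) ≠ 0 := by
    simp [Real.pi_ne_zero, Complex.I_ne_zero, Complex.ofReal_ne_zero]
  -- the combined integral
  have c12 : CircleIntegrable (fun w => (w - t)⁻¹ • g w - (w - 0)⁻¹ • g w) 0 r :=
    (cont1.sub cont2).circleIntegrable hr.le
  have c3t : CircleIntegrable (fun w => t • ((w - 0) ^ (-2 : ℤ) • g w)) 0 r :=
    cont3.circleIntegrable hr.le
  have hD' : (∮ w in C(0, r), (w - 0) ^ (-2 : ℤ) • g w) = (2 * Real.pi * I : ℂ) • deriv g 0 := by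
    rw [hD, smul_inv_smul₀ hpi]
  have combo : g t - g 0 - t * deriv g 0
      = (2 * Real.pi * I : ℂ)⁻¹ * (∮ w in C(0, r), ((w - t)⁻¹ • g w - (w - 0)⁻¹ • g w - (t • ((w - 0) ^ (-2 : ℤ) • g w)))) := by
    rw [circleIntegral.integral_sub c12 c3t, circleIntegral.integral_sub c1 c2,
      circleIntegral.integral_smul, hA, hB, hD']
    simp only [smul_eq_mul]
    field_simp
  rw [combo]
  rw [norm_mul]
  have hnormpi : ‖(2 * (Real.pi:ℂ) * I)⁻¹‖ = (2 * Real.pi)⁻¹ := by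
    rw [norm_inv]
    simp [Real.norm_eq_abs, abs_of_pos Real.pi_pos]
  rw [hnormpi]
  have hbound : ‖∮ w in C(0, r), ((w - t)⁻¹ • g w - (w - 0)⁻¹ • g w - (t • ((w - 0) ^ (-2 : ℤ) • g w)))‖
      ≤ 2 * Real.pi * r * (‖t‖^2 * M / (r^2 * (r - ‖t‖))) := by
    have := circleIntegral.norm_integral_le_of_norm_le_const (c := (0:ℂ)) (R := r) hr.le
      (f := fun w => ((w - t)⁻¹ • g w - (w - 0)⁻¹ • g w - (t • ((w - 0) ^ (-2 : ℤ) • g w))))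
      (C := ‖t‖^2 * M / (r^2 * (r - ‖t‖))) ?_
    · simpa [abs_of_pos hr] using this
    · intro w hw
      have hwr : ‖w‖ = r := mem_sphere_zero_iff_norm.1 hw
      have hw0' : w ≠ 0 := hw0 w hw
      have hwt' : w - t ≠ 0 := sub_ne_zero.2 (hwt w hw)
      have hzp : w ^ (-2 : ℤ) = (w ^ (2:ℕ))⁻¹ := by
        rw [zpow_neg, show ((2:ℤ)) = ((2:ℕ):ℤ) from rfl, zpow_natCast]
      have scal : (w - t)⁻¹ - w⁻¹ - t * (w^(2:ℕ))⁻¹ = t^2 * (w^(2:ℕ))⁻¹ * (w - t)⁻¹ := by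
        field_simp
        ring
      have key : (w - t)⁻¹ • g w - (w - 0)⁻¹ • g w - (t • ((w - 0) ^ (-2 : ℤ) • g w))
          = (t^2 * (w^(2:ℕ))⁻¹ * (w - t)⁻¹) * g w := by
        simp only [smul_eq_mul, sub_zero, hzp]
        rw [← scal]; ring
      show ‖(w - t)⁻¹ • g w - (w - 0)⁻¹ • g w - (t • ((w - 0) ^ (-2 : ℤ) • g w))‖ ≤ _
      rw [key, norm_mul]
      have hge : r - ‖t‖ ≤ ‖w - t‖ := by
        have := norm_sub_norm_le w t; linarith
      have hwtpos : (0:ℝ) < ‖w - t‖ := lt_of_lt_of_le htr hge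
      have h1 : ‖t^2 * (w^(2:ℕ))⁻¹ * (w - t)⁻¹‖ ≤ ‖t‖^2 / (r^2 * (r - ‖t‖)) := by
        rw [norm_mul, norm_mul, norm_pow, norm_inv, norm_inv, norm_pow, hwr]
        have hinv : ‖w - t‖⁻¹ ≤ (r - ‖t‖)⁻¹ := by
          apply inv_anti₀ htr hge
        calc ‖t‖^2 * (r^2)⁻¹ * ‖w - t‖⁻¹ ≤ ‖t‖^2 * (r^2)⁻¹ * (r - ‖t‖)⁻¹ := by
              apply mul_le_mul_of_nonneg_left hinv (by positivity)
          _ = ‖t‖^2 / (r^2 * (r - ‖t‖)) := by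
              rw [div_eq_mul_inv, mul_inv]; ring
      calc ‖t^2 * (w^(2:ℕ))⁻¹ * (w - t)⁻¹‖ * ‖g w‖ ≤ (‖t‖^2 / (r^2 * (r - ‖t‖))) * M := by
            apply mul_le_mul h1 (hM w hw) (norm_nonneg _) (by positivity)
        _ = ‖t‖^2 * M / (r^2 * (r - ‖t‖)) := by ring
  calc (2 * Real.pi)⁻¹ * ‖∮ w in C(0, r), ((w - t)⁻¹ • g w - (w - 0)⁻¹ • g w - (t • ((w - 0) ^ (-2 : ℤ) • g w)))‖
      ≤ (2 * Real.pi)⁻¹ * (2 * Real.pi * r * (‖t‖^2 * M / (r^2 * (r - ‖t‖)))) := by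
        apply mul_le_mul_of_nonneg_left hbound (by positivity)
    _ = ‖t‖^2 * M / (r * (r - ‖t‖)) := by
        have h1 : Real.pi ≠ 0 := Real.pi_ne_zero
        have h2 : r ≠ 0 := hr.ne'
        have h3 : r - ‖t‖ ≠ 0 := htr.ne'
        set B := r - ‖t‖
        field_simp

section keyX
variable {X : Type*} [NormedAddCommGroup X] [NormedSpace ℂ X]

lemma affine_hasDerivAt (r0 : X) (h : X) (w : ℂ) :
    HasDerivAt (fun w : ℂ => r0 + w • h) h w := by
  simpa using ((hasDerivAt_id w).smul_const h).const_add r0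

lemma deriv_slice {f : X → ℂ} {r0 : X} (hfd : DifferentiableAt ℂ f r0) (h : X) :
    HasDerivAt (fun w : ℂ => f (r0 + w • h)) (fderiv ℂ f r0 h) 0 := by
  have hc : HasDerivAt (fun w : ℂ => r0 + w • h) h 0 := affine_hasDerivAt r0 h 0
  have hF : HasFDerivAt f (fderiv ℂ f r0) (r0 + (0:ℂ) • h) := by
    simpa using hfd.hasFDerivAt
  exact hF.comp_hasDerivAt (0:ℂ) hc

lemma slice_diffContOnCl {f : X → ℂ} {r0 : X} {ρ : ℝ}
    (hf : DifferentiableOn ℂ f (ball r0 ρ)) {h : X} {r : ℝ}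
    (hmaps : ∀ w : ℂ, ‖w‖ ≤ r → r0 + w • h ∈ ball r0 ρ) :
    DiffContOnCl ℂ (fun w : ℂ => f (r0 + w • h)) (ball (0:ℂ) r) := by
  have hdiff : DifferentiableOn ℂ (fun w : ℂ => f (r0 + w • h)) (closedBall (0:ℂ) r) := by
    intro w hw
    have hw' : r0 + w • h ∈ ball r0 ρ := hmaps w (by simpa [dist_eq_norm] using mem_closedBall.1 hw)
    have h1 : DifferentiableAt ℂ f (r0 + w • h) :=
      hf.differentiableAt (isOpen_ball.mem_nhds hw')
    exact (h1.comp w (affine_hasDerivAt r0 h w).differentiableAt).differentiableWithinAt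
  exact (hdiff.mono closure_ball_subset_closedBall).diffContOnCl

lemma keyX_deriv {f : X → ℂ} {r0 : X} {ρ M : ℝ} (hρ : 0 < ρ)
    (hf : DifferentiableOn ℂ f (ball r0 ρ))
    (hM : ∀ r ∈ ball r0 ρ, ‖f r‖ ≤ M) (h : X) :
    ‖fderiv ℂ f r0 h‖ ≤ 2 * M / ρ * ‖h‖ := by
  have hM0 : 0 ≤ M := le_trans (norm_nonneg _) (hM r0 (mem_ball_self hρ))
  rcases eq_or_ne h 0 with rfl | hne
  · simp [map_zero]
  have hh : 0 < ‖h‖ := norm_pos_iff.2 hne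
  set r : ℝ := ρ / (2 * ‖h‖) with hrdef
  have hr : 0 < r := by positivity
  have hmaps : ∀ w : ℂ, ‖w‖ ≤ r → r0 + w • h ∈ ball r0 ρ := by
    intro w hw
    rw [mem_ball, dist_eq_norm]
    have : ‖r0 + w • h - r0‖ = ‖w‖ * ‖h‖ := by rw [add_sub_cancel_left, norm_smul]
    rw [this]
    have : ‖w‖ * ‖h‖ ≤ r * ‖h‖ := mul_le_mul_of_nonneg_right hw (norm_nonneg h)
    have hrh : r * ‖h‖ = ρ / 2 := by
      rw [hrdef]; field_simp
    linarith
  have hg := slice_diffContOnCl hf hmaps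
  have hsph : ∀ w ∈ sphere (0:ℂ) r, ‖f (r0 + w • h)‖ ≤ M := by
    intro w hw
    exact hM _ (hmaps w (le_of_eq (mem_sphere_zero_iff_norm.1 hw)))
  have hfd : DifferentiableAt ℂ f r0 := hf.differentiableAt (isOpen_ball.mem_nhds (mem_ball_self hρ))
  have hder := (deriv_slice hfd h).deriv
  have := Complex.norm_deriv_le_of_forall_mem_sphere_norm_le hr hg hsph
  rw [hder] at this
  calc ‖fderiv ℂ f r0 h‖ ≤ M / r := this
    _ = 2 * M / ρ * ‖h‖ := by rw [hrdef]; field_simp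

lemma keyX_quad {f : X → ℂ} {r0 : X} {ρ M : ℝ} (hρ : 0 < ρ)
    (hf : DifferentiableOn ℂ f (ball r0 ρ))
    (hM : ∀ r ∈ ball r0 ρ, ‖f r‖ ≤ M) {h : X} (hh2 : ‖h‖ ≤ ρ / 2) :
    ‖f (r0 + h) - f r0 - fderiv ℂ f r0 h‖ ≤ 8 * M / ρ ^ 2 * ‖h‖ ^ 2 := by
  have hM0 : 0 ≤ M := le_trans (norm_nonneg _) (hM r0 (mem_ball_self hρ))
  rcases eq_or_ne h 0 with rfl | hne
  · simp [map_zero]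
  have hh : 0 < ‖h‖ := norm_pos_iff.2 hne
  set R0 : ℝ := ρ / ‖h‖ with hR0def
  have hR02 : 2 ≤ R0 := by rw [hR0def, le_div_iff₀ hh]; linarith
  set r : ℝ := (R0 + 1) / 2 with hrdef
  have hr : 0 < r := by rw [hrdef]; linarith
  have hr1 : 1 < r := by rw [hrdef]; linarith
  have hrR0 : r < R0 := by rw [hrdef]; linarith
  have hmaps : ∀ w : ℂ, ‖w‖ ≤ r → r0 + w • h ∈ ball r0 ρ := by
    intro w hw
    rw [mem_ball, dist_eq_norm, add_sub_cancel_left, norm_smul]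
    have h1 : ‖w‖ * ‖h‖ ≤ r * ‖h‖ := mul_le_mul_of_nonneg_right hw (norm_nonneg h)
    have h2 : r * ‖h‖ < R0 * ‖h‖ := by
      exact mul_lt_mul_of_pos_right hrR0 hh
    have h3 : R0 * ‖h‖ = ρ := by rw [hR0def]; field_simp
    linarith
  have hg := slice_diffContOnCl hf hmaps
  have hsph : ∀ w ∈ sphere (0:ℂ) r, ‖f (r0 + w • h)‖ ≤ M := fun w hw =>
    hM _ (hmaps w (le_of_eq (mem_sphere_zero_iff_norm.1 hw)))
  have hfd : DifferentiableAt ℂ f r0 := hf.differentiableAt (isOpen_ball.mem_nhds (mem_ball_self hρ))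
  have hder := (deriv_slice hfd h).deriv
  have hkc := keyC hr hg hsph (t := 1) (by simpa using hr1)
  rw [hder] at hkc
  have e0 : r0 + (1:ℂ) • h = r0 + h := by rw [one_smul]
  have e1 : r0 + (0:ℂ) • h = r0 := by rw [zero_smul, add_zero]
  rw [e0, e1] at hkc
  have hn1 : ‖(1:ℂ)‖ = 1 := by simp
  rw [hn1] at hkc
  simp only [one_pow, one_mul, mul_one] at hkc
  -- hkc : ‖f (r0+h) - f r0 - fderiv ℂ f r0 h‖ ≤ M / (r * (r - 1))
  refine hkc.trans ?_
  -- M / (r*(r-1)) ≤ 8 M / ρ² * ‖h‖²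
  have hrge : R0 / 2 ≤ r := by rw [hrdef]; linarith
  have hr1ge : R0 / 4 ≤ r - 1 := by rw [hrdef]; linarith
  have hR0pos : 0 < R0 := by linarith
  have hprod : R0 ^ 2 / 8 ≤ r * (r - 1) := by
    have := mul_le_mul hrge hr1ge (by linarith) (by linarith)
    calc R0 ^ 2 / 8 = R0 / 2 * (R0 / 4) := by ring
      _ ≤ r * (r - 1) := this
  have hq : M / (r * (r - 1)) ≤ M / (R0 ^ 2 / 8) := by
    apply div_le_div_of_nonneg_left hM0 (by positivity) hprod
  refine hq.trans (le_of_eq ?_)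
  rw [hR0def]
  have hρ0 : ρ ≠ 0 := hρ.ne'
  have hh0 : ‖h‖ ≠ 0 := hh.ne'
  field_simp


end keyX
end helpers

open Metric Filter in
lemma norm_Lp_top_le_of_ae_bound {α E : Type*} [MeasurableSpace α] {μ : MeasureTheory.Measure α}
    [NormedAddCommGroup E] (f : MeasureTheory.Lp E ⊤ μ) {c : ℝ} (hc : 0 ≤ c)
    (h : ∀ᵐ x ∂μ, ‖f x‖ ≤ c) : ‖f‖ ≤ c := by
  rw [MeasureTheory.Lp.norm_def, MeasureTheory.eLpNorm_exponent_top]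
  have h2 : MeasureTheory.eLpNormEssSup (f : α → E) μ ≤ ENNReal.ofReal c :=
    MeasureTheory.eLpNormEssSup_le_of_ae_bound h
  calc (MeasureTheory.eLpNormEssSup (f : α → E) μ).toReal
      ≤ (ENNReal.ofReal c).toReal := ENNReal.toReal_mono ENNReal.ofReal_ne_top h2
    _ = c := ENNReal.toReal_ofReal hc

lemma isOpen_cnbhd {X : Type*} [NormedAddCommGroup X] (T : Set X) (δ : ℝ) :
    IsOpen (cnbhd T δ) := by
  have : cnbhd T δ = ⋃ r' ∈ T, Metric.ball r' δ := by
    ext r; simp [cnbhd, Metric.mem_ball, dist_eq_norm]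
  rw [this]
  exact isOpen_biUnion fun _ _ => Metric.isOpen_ball




/-- (Holomorphy of the truncated kernels.)
Let `D ⊆ ℝ^d` (`d ∈ {2,3}`) be bounded open, `X` a complex Banach space, `𝔗 ⊆ X` compact,
`δ > 0`.  Let `p_{r,ℂ}` be measurable in `(x,y)`, holomorphic in `r` on `𝔗_δ` for each
`(x,y) ∈ (D×D)*`, and satisfy `|p_{r,ℂ}(x,y)| ≤ C ‖x−y‖^{−ν}` (`ν ∈ (0,d)`) uniformly on
`𝔗_δ`.  Then for each fixed `n` the truncated-kernel map
`𝔗_δ ∋ r ↦ p_{r,ℂ}(x,y)·χ(n‖x−y‖^ν) ∈ L^∞(D×D)` is holomorphic and bounded on `𝔗_δ`. -/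
theorem truncated_kernel_holomorphic_Linfty
    {d : ℕ} (hd : d = 2 ∨ d = 3)
    (D : Set (EuclideanSpace ℝ (Fin d))) (hDo : IsOpen D) (hDb : Bornology.IsBounded D)
    {X : Type*} [NormedAddCommGroup X] [NormedSpace ℂ X] [CompleteSpace X]
    (T : Set X) (hT : IsCompact T) (δ : ℝ) (hδ : 0 < δ)
    (p : X → EuclideanSpace ℝ (Fin d) → EuclideanSpace ℝ (Fin d) → ℂ)
    (hp_meas : ∀ r ∈ cnbhd T δ, Measurable (Function.uncurry (p r)))
    (hp_holo : ∀ x ∈ D, ∀ y ∈ D, x ≠ y →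
      DifferentiableOn ℂ (fun r => p r x y) (cnbhd T δ))
    (C : ℝ) (hC : 0 < C) (ν : ℝ) (hν0 : 0 < ν) (hνd : ν < d)
    (hp_bound : ∀ r ∈ cnbhd T δ, ∀ x ∈ D, ∀ y ∈ D, x ≠ y →
      ‖p r x y‖ ≤ C / ‖x - y‖ ^ ν)
    (χ : ℝ → ℝ) (hχ_smooth : ContDiff ℝ (⊤ : ℕ∞) χ)
    (hχ0 : ∀ t ∈ Set.Icc (0 : ℝ) (1 / 2), χ t = 0)
    (hχ1 : ∀ t : ℝ, 1 ≤ t → χ t = 1)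
    (hχ01 : ∀ t ∈ Set.Ici (0 : ℝ), χ t ∈ Set.Icc (0 : ℝ) 1) :
    ∀ n : ℕ,
      ∃ Pn : X → Lp ℂ ⊤ ((volume.restrict D).prod (volume.restrict D)),
        (∀ r ∈ cnbhd T δ,
          (Pn r : EuclideanSpace ℝ (Fin d) × EuclideanSpace ℝ (Fin d) → ℂ)
            =ᵐ[(volume.restrict D).prod (volume.restrict D)]
            fun z => p r z.1 z.2 * (χ (n * ‖z.1 - z.2‖ ^ ν) : ℂ)) ∧
        DifferentiableOn ℂ Pn (cnbhd T δ) ∧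
        (∃ C' : ℝ, ∀ r ∈ cnbhd T δ, ‖Pn r‖ ≤ C') := by
  intro n
  classical
  set μ := (volume.restrict D).prod (volume.restrict D) with hμdef
  have hU : IsOpen (cnbhd T δ) := isOpen_cnbhd T δ
  have hDmeas : MeasurableSet D := hDo.measurableSet
  have hd0 : 0 < d := by rcases hd with h | h <;> omega
  haveI : Nonempty (Fin d) := ⟨⟨0, hd0⟩⟩
  -- a.e. every point is "good"
  have hae_mem : ∀ᵐ z ∂μ, z.1 ∈ D ∧ z.2 ∈ D := by
    rw [hμdef, Measure.prod_restrict]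
    filter_upwards [ae_restrict_mem (hDmeas.prod hDmeas)] with z hz
    exact ⟨hz.1, hz.2⟩
  have hae_ne : ∀ᵐ z ∂μ, z.1 ≠ z.2 := by
    have hdmeas : MeasurableSet {z : EuclideanSpace ℝ (Fin d) × EuclideanSpace ℝ (Fin d) | z.1 = z.2} :=
      (isClosed_eq continuous_fst continuous_snd).measurableSet
    have hdiag : μ {z : EuclideanSpace ℝ (Fin d) × EuclideanSpace ℝ (Fin d) | z.1 = z.2} = 0 := by
      rw [hμdef, Measure.prod_apply hdmeas]
      have hz : ∀ x : EuclideanSpace ℝ (Fin d),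
          (volume.restrict D) (Prod.mk x ⁻¹' {z : EuclideanSpace ℝ (Fin d) × EuclideanSpace ℝ (Fin d) | z.1 = z.2}) = 0 := by
        intro x
        have e : Prod.mk x ⁻¹' {z : EuclideanSpace ℝ (Fin d) × EuclideanSpace ℝ (Fin d) | z.1 = z.2}
            = {x} := by ext y; simp [eq_comm]
        rw [e, Measure.restrict_apply (measurableSet_singleton x)]
        exact measure_mono_null Set.inter_subset_left (by simp)
      calc (∫⁻ x, (volume.restrict D) (Prod.mk x ⁻¹' {z : EuclideanSpace ℝ (Fin d) × EuclideanSpace ℝ (Fin d) | z.1 = z.2}) ∂(volume.restrict D))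
          = ∫⁻ _, 0 ∂(volume.restrict D) := lintegral_congr hz
        _ = 0 := lintegral_zero
    rw [ae_iff]
    simpa [not_not] using hdiag
  -- the truncated kernel
  set q : X → (EuclideanSpace ℝ (Fin d) × EuclideanSpace ℝ (Fin d)) → ℂ :=
    fun r z => p r z.1 z.2 * (χ (n * ‖z.1 - z.2‖ ^ ν) : ℂ) with hqdef
  set M : ℝ := 2 * n * C with hMdef
  have hM0 : 0 ≤ M := by positivity
  have hmeasq : ∀ r ∈ cnbhd T δ, Measurable (q r) := by
    intro r hr
    apply Measurable.mul
    · exact hp_meas r hr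
    · have : Continuous fun z : EuclideanSpace ℝ (Fin d) × EuclideanSpace ℝ (Fin d) =>
          ((χ (n * ‖z.1 - z.2‖ ^ ν) : ℝ) : ℂ) := by
        apply Complex.continuous_ofReal.comp
        apply hχ_smooth.continuous.comp
        exact continuous_const.mul
          (((continuous_fst.sub continuous_snd).norm).rpow_const (fun z => Or.inr hν0.le))
      exact this.measurable
  have hqbound : ∀ r ∈ cnbhd T δ, ∀ z : EuclideanSpace ℝ (Fin d) × EuclideanSpace ℝ (Fin d),
      z.1 ∈ D → z.2 ∈ D → z.1 ≠ z.2 → ‖q r z‖ ≤ M := by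
    intro r hr z h1 h2 hne
    have hs0 : 0 < ‖z.1 - z.2‖ ^ ν :=
      Real.rpow_pos_of_pos (norm_pos_iff.2 (sub_ne_zero_of_ne hne)) ν
    have hts : (0:ℝ) ≤ n * ‖z.1 - z.2‖ ^ ν := by positivity
    rw [hqdef]
    by_cases hcase : (n:ℝ) * ‖z.1 - z.2‖ ^ ν ≤ 1/2
    · have hz : χ (n * ‖z.1 - z.2‖ ^ ν) = 0 := hχ0 _ ⟨hts, hcase⟩
      simp only [hz, Complex.ofReal_zero, mul_zero, norm_zero]
      exact hM0
    · push_neg at hcase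
      have hχle : ‖((χ (n * ‖z.1 - z.2‖ ^ ν) : ℝ) : ℂ)‖ ≤ 1 := by
        rw [Complex.norm_real, Real.norm_eq_abs]
        have := hχ01 _ hts
        rw [_root_.abs_of_nonneg this.1]
        exact this.2
      have hp1 : ‖p r z.1 z.2‖ ≤ C / ‖z.1 - z.2‖ ^ ν := hp_bound r hr z.1 h1 z.2 h2 hne
      have hp2 : C / ‖z.1 - z.2‖ ^ ν ≤ M := by
        rw [div_le_iff₀ hs0, hMdef]
        nlinarith [hC.le]
      calc ‖p r z.1 z.2 * ((χ (n * ‖z.1 - z.2‖ ^ ν) : ℝ) : ℂ)‖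
          = ‖p r z.1 z.2‖ * ‖((χ (n * ‖z.1 - z.2‖ ^ ν) : ℝ) : ℂ)‖ := norm_mul _ _
        _ ≤ (C / ‖z.1 - z.2‖ ^ ν) * 1 :=
            mul_le_mul hp1 hχle (norm_nonneg _) (by positivity)
        _ = C / ‖z.1 - z.2‖ ^ ν := mul_one _
        _ ≤ M := hp2
  have haeq : ∀ r ∈ cnbhd T δ, ∀ᵐ z ∂μ, ‖q r z‖ ≤ M := by
    intro r hr
    filter_upwards [hae_mem, hae_ne] with z hz hne
    exact hqbound r hr z hz.1 hz.2 hne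
  have hmemq : ∀ r (hr : r ∈ cnbhd T δ), MemLp (q r) ⊤ μ := fun r hr =>
    memLp_top_of_bound ((hmeasq r hr).aestronglyMeasurable) M (haeq r hr)
  -- pointwise holomorphy of q in r
  have hdiffq : ∀ z : EuclideanSpace ℝ (Fin d) × EuclideanSpace ℝ (Fin d),
      z.1 ∈ D → z.2 ∈ D → z.1 ≠ z.2 →
      DifferentiableOn ℂ (fun r => q r z) (cnbhd T δ) := by
    intro z h1 h2 hne
    rw [hqdef]
    exact (hp_holo z.1 h1 z.2 h2 hne).mul_const _
  refine ⟨fun r => if hr : r ∈ cnbhd T δ then MemLp.toLp (q r) (hmemq r hr) else 0, ?_, ?_, ?_⟩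
  · -- a.e. representation
    intro r hr
    simp only [dif_pos hr]
    refine (MemLp.coeFn_toLp _).trans ?_
    rw [hqdef]
  · -- holomorphy
    intro r0 hr0
    obtain ⟨ε, hε, hball⟩ := Metric.isOpen_iff.1 hU r0 hr0
    have hballsub : ∀ {r : X}, r ∈ Metric.ball r0 ε → r ∈ cnbhd T δ := fun hr => hball hr
    -- good points
    set G : Set (EuclideanSpace ℝ (Fin d) × EuclideanSpace ℝ (Fin d)) :=
      {z | z.1 ∈ D ∧ z.2 ∈ D ∧ z.1 ≠ z.2} with hGdef
    have haeG : ∀ᵐ z ∂μ, z ∈ G := by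
      filter_upwards [hae_mem, hae_ne] with z h1 h2
      exact ⟨h1.1, h1.2, h2⟩
    have hdiffG : ∀ z ∈ G, DifferentiableOn ℂ (fun r => q r z) (Metric.ball r0 ε) :=
      fun z hz => (hdiffq z hz.1 hz.2.1 hz.2.2).mono (fun r hr => hball hr)
    have hboundG : ∀ z ∈ G, ∀ r ∈ Metric.ball r0 ε, ‖q r z‖ ≤ M :=
      fun z hz r hr => hqbound r (hball hr) z hz.1 hz.2.1 hz.2.2
    -- the candidate derivative, pointwise
    set φ : X → (EuclideanSpace ℝ (Fin d) × EuclideanSpace ℝ (Fin d)) → ℂ :=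
      fun h z => fderiv ℂ (fun r => q r z) r0 h with hφdef
    have hφbound : ∀ z ∈ G, ∀ h : X, ‖φ h z‖ ≤ 2 * M / ε * ‖h‖ :=
      fun z hz h => keyX_deriv hε (hdiffG z hz) (hboundG z hz) h
    have hquad : ∀ z ∈ G, ∀ h : X, ‖h‖ ≤ ε / 2 →
        ‖q (r0 + h) z - q r0 z - φ h z‖ ≤ 8 * M / ε ^ 2 * ‖h‖ ^ 2 :=
      fun z hz h hh => keyX_quad hε (hdiffG z hz) (hboundG z hz) hh
    -- measurability of φ h
    have hφmeas : ∀ h : X, AEStronglyMeasurable (φ h) μ := by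
      intro h
      rcases eq_or_ne h 0 with rfl | hne
      · have : φ 0 = fun _ => 0 := funext fun z => map_zero _
        rw [this]
        exact aestronglyMeasurable_const
      have hh : 0 < ‖h‖ := norm_pos_iff.2 hne
      obtain ⟨K, hK⟩ := exists_nat_gt (‖h‖ / ε)
      have hKε : ‖h‖ < K * ε := by
        rw [div_lt_iff₀ hε] at hK
        exact hK
      set t : ℕ → ℂ := fun k => (((k + (K+1) : ℕ) : ℂ))⁻¹ with htdef
      have htne : ∀ k, t k ≠ 0 := by
        intro k
        rw [htdef]
        exact inv_ne_zero (Nat.cast_ne_zero.2 (Nat.succ_ne_zero _))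
      have htnorm : ∀ k, ‖t k‖ = ((k + (K+1) : ℕ) : ℝ)⁻¹ := by
        intro k
        rw [htdef]
        rw [norm_inv, Complex.norm_natCast]
      have htmem : ∀ k, r0 + t k • h ∈ Metric.ball r0 ε := by
        intro k
        rw [Metric.mem_ball, dist_eq_norm, add_sub_cancel_left, norm_smul, htnorm]
        rw [inv_mul_lt_iff₀ (by positivity)]
        have h1 : (K:ℝ) * ε ≤ ((k + (K+1) : ℕ) : ℝ) * ε := by
          apply mul_le_mul_of_nonneg_right _ hε.le
          push_cast
          linarith [Nat.cast_nonneg (α := ℝ) k]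
        linarith
      have hseq : ∀ k : ℕ, AEStronglyMeasurable
          (fun z => (t k)⁻¹ • (q (r0 + t k • h) z - q r0 z)) μ := by
        intro k
        have hm : Measurable (fun z => (t k)⁻¹ • (q (r0 + t k • h) z - q r0 z)) :=
          Measurable.const_smul ((hmeasq _ (hball (htmem k))).sub
            (hmeasq r0 (hball (Metric.mem_ball_self hε)))) ((t k)⁻¹)
        exact hm.aestronglyMeasurable
      apply aestronglyMeasurable_of_tendsto_ae Filter.atTop hseq
      filter_upwards [haeG] with z hz
      have hdat : DifferentiableAt ℂ (fun r => q r z) r0 :=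
        (hdiffG z hz).differentiableAt (Metric.isOpen_ball.mem_nhds (Metric.mem_ball_self hε))
      have hda : HasDerivAt (fun w : ℂ => q (r0 + w • h) z) (φ h z) 0 := deriv_slice hdat h
      have hslope := hasDerivAt_iff_tendsto_slope.1 hda
      have hts : Filter.Tendsto t Filter.atTop (nhdsWithin (0:ℂ) {(0:ℂ)}ᶜ) := by
        apply tendsto_nhdsWithin_of_tendsto_nhds_of_eventually_within
        · rw [tendsto_zero_iff_norm_tendsto_zero]
          have : Filter.Tendsto (fun k : ℕ => ((k + (K+1) : ℕ) : ℝ)) Filter.atTop Filter.atTop := by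
            apply tendsto_natCast_atTop_atTop.comp
            exact Filter.tendsto_add_atTop_nat (K+1)
          have h2 := this.inv_tendsto_atTop
          apply h2.congr'
          filter_upwards with k
          rw [htnorm k]
          rfl
        · exact Filter.Eventually.of_forall fun k => htne k
      have hcomp := hslope.comp hts
      apply hcomp.congr
      intro k
      have e0 : q (r0 + (0:ℂ) • h) z = q r0 z := by rw [zero_smul, add_zero]
      simp only [Function.comp_apply, slope_def_field, e0, sub_zero, div_eq_inv_mul,
        smul_eq_mul]
    have hφmem : ∀ h : X, MemLp (φ h) ⊤ μ := by
      intro h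
      apply memLp_top_of_bound (hφmeas h) (2 * M / ε * ‖h‖)
      filter_upwards [haeG] with z hz
      exact hφbound z hz h
    have hnormφ : ∀ h : X, ‖MemLp.toLp (φ h) (hφmem h)‖ ≤ 2 * M / ε * ‖h‖ := by
      intro h
      apply norm_Lp_top_le_of_ae_bound _ (by positivity)
      filter_upwards [MemLp.coeFn_toLp (hφmem h), haeG] with z hz1 hz2
      rw [hz1]
      exact hφbound z hz2 h
    -- the derivative as a continuous linear map
    set Llin : X →ₗ[ℂ] Lp ℂ ⊤ μ :=
      { toFun := fun h => MemLp.toLp (φ h) (hφmem h)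
        map_add' := by
          intro a b
          have e : φ (a + b) = φ a + φ b := funext fun z => map_add _ _ _
          show MemLp.toLp (φ (a + b)) (hφmem (a + b))
              = MemLp.toLp (φ a) (hφmem a) + MemLp.toLp (φ b) (hφmem b)
          rw [← MemLp.toLp_add (hφmem a) (hφmem b)]
          exact MemLp.toLp_congr _ _ (by rw [e])
        map_smul' := by
          intro c x
          have e : φ (c • x) = c • φ x := funext fun z => map_smul _ _ _
          show MemLp.toLp (φ (c • x)) (hφmem (c • x)) = c • MemLp.toLp (φ x) (hφmem x)
          rw [← MemLp.toLp_const_smul c (hφmem x)]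
          exact MemLp.toLp_congr _ _ (by rw [e]) } with hLlindef
    set L : X →L[ℂ] Lp ℂ ⊤ μ := Llin.mkContinuous (2 * M / ε) hnormφ with hLdef
    apply DifferentiableAt.differentiableWithinAt
    apply HasFDerivAt.differentiableAt (f' := L)
    rw [hasFDerivAt_iff_isLittleO_nhds_zero, Asymptotics.isLittleO_iff]
    intro c hc
    have hrad : (0:ℝ) < min (ε/2) (c * ε^2 / (8 * M + 1)) := by positivity
    filter_upwards [Metric.ball_mem_nhds (0:X) hrad] with h hh
    rw [Metric.mem_ball, dist_zero_right] at hh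
    have hh1 : ‖h‖ ≤ ε / 2 := le_of_lt (lt_of_lt_of_le hh (min_le_left _ _))
    have hh2 : ‖h‖ ≤ c * ε^2 / (8 * M + 1) := le_of_lt (lt_of_lt_of_le hh (min_le_right _ _))
    have hmem1 : r0 + h ∈ cnbhd T δ := by
      apply hball
      rw [Metric.mem_ball, dist_eq_norm, add_sub_cancel_left]
      linarith
    simp only [dif_pos hmem1, dif_pos hr0]
    -- bound the norm of the difference in L∞
    have hnorm : ‖MemLp.toLp (q (r0 + h)) (hmemq _ hmem1) - MemLp.toLp (q r0) (hmemq _ hr0) - L h‖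
        ≤ 8 * M / ε ^ 2 * ‖h‖ ^ 2 := by
      apply norm_Lp_top_le_of_ae_bound _ (by positivity)
      have hL : (L h : (EuclideanSpace ℝ (Fin d) × EuclideanSpace ℝ (Fin d)) → ℂ)
          =ᵐ[μ] φ h := MemLp.coeFn_toLp (hφmem h)
      filter_upwards [Lp.coeFn_sub (MemLp.toLp (q (r0 + h)) (hmemq _ hmem1) - MemLp.toLp (q r0) (hmemq _ hr0)) (L h),
        Lp.coeFn_sub (MemLp.toLp (q (r0 + h)) (hmemq _ hmem1)) (MemLp.toLp (q r0) (hmemq _ hr0)),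
        MemLp.coeFn_toLp (hmemq _ hmem1), MemLp.coeFn_toLp (hmemq _ hr0), hL, haeG]
        with z e1 e2 e3 e4 e5 hz
      rw [e1, Pi.sub_apply, e2, Pi.sub_apply, e3, e4, e5]
      exact hquad z hz h hh1
    refine hnorm.trans ?_
    -- quadratic beats linear
    have e1 : 8 * M / ε^2 * ‖h‖^2 = (8 * M / ε^2 * ‖h‖) * ‖h‖ := by ring
    have e2 : 8 * M / ε^2 * ‖h‖ ≤ 8 * M / ε^2 * (c * ε^2 / (8 * M + 1)) :=
      mul_le_mul_of_nonneg_left hh2 (by positivity)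
    have e3 : 8 * M / ε^2 * (c * ε^2 / (8 * M + 1)) = c * (8 * M / (8 * M + 1)) := by
      field_simp
    have e4 : 8 * M / (8 * M + 1) ≤ 1 := by
      rw [div_le_one (by positivity)]
      linarith
    have e5 : 8 * M / ε^2 * ‖h‖ ≤ c := by
      refine e2.trans ?_
      rw [e3]
      exact mul_le_of_le_one_right hc.le e4
    rw [e1]
    exact mul_le_mul_of_nonneg_right e5 (norm_nonneg h)
  · -- uniform bound
    refine ⟨M, fun r hr => ?_⟩
    simp only [dif_pos hr]
    exact norm_Lp_top_le_of_ae_bound _ hM0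
      (by filter_upwards [MemLp.coeFn_toLp (hmemq r hr), haeq r hr] with z e1 e2
          rw [e1]; exact e2)
end
end

section
/- For every z ∈ ℂ with Re z > 0, the integral I₀(z) := ∫₀^∞ exp((i−t)z)/√(t²−2it) dt converges absolutely and satisfies |(2/π)·I₀(z)| ≤ |exp(iz)|·√(2/(π·Re z)); equivalently, the Hankel function of the first kind of order zero, H₀^{(1)}(z) = −(2i/π)∫₀^∞ exp((i−t)z)/√(t²−2it) dt, satisfies |H₀^{(1)}(z)| ≤ |exp(iz)|·√(2/(π·Re z)). -/
/-! Since `|exp((i - t)z)| = |exp(iz)| e^{-t Re z}` and the principal square root has modulus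
`√|w|` with `|t² - 2it| ≥ 2t`, the integrand is dominated by `|exp(iz)| e^{-t Re z} / √(2t)`.
By `Γ(1/2) = √π` this majorant integrates to `|exp(iz)| √(π / (2 Re z))`, and `2/π` times that is
the bound. -/

noncomputable section

open Complex MeasureTheory

open Set

lemma norm_csqrt (w : ℂ) : ‖csqrt w‖ = √‖w‖ := by
  rw [csqrt, Real.sqrt_eq_rpow, ← norm_cpow_real]
  norm_num

lemma sqrt_abs_im_le_norm_csqrt (w : ℂ) : √|w.im| ≤ ‖csqrt w‖ :=
  norm_csqrt w ▸ Real.sqrt_le_sqrt (abs_im_le_norm w)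

lemma im_sq_sub_two_I_mul (t : ℝ) : ((t : ℂ) ^ 2 - 2 * I * t).im = -(2 * t) := by
  simp [← ofReal_pow]

lemma sqrt_two_mul_le_norm_csqrt {t : ℝ} (ht : 0 ≤ t) :
    √(2 * t) ≤ ‖csqrt ((t : ℂ) ^ 2 - 2 * I * t)‖ := by
  have := sqrt_abs_im_le_norm_csqrt ((t : ℂ) ^ 2 - 2 * I * t)
  rwa [im_sq_sub_two_I_mul, abs_neg, abs_of_nonneg (by positivity)] at this

lemma norm_exp_I_sub_ofReal_mul (z : ℂ) (t : ℝ) :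
    ‖exp ((I - t) * z)‖ = ‖exp (I * z)‖ * Real.exp (-(z.re * t)) := by
  simp only [norm_exp, ← Real.exp_add]
  congr 1
  simp
  ring

lemma eqOn_rpow_half_sub_one_mul_exp (b : ℝ) :
    EqOn (fun t : ℝ => t ^ ((1 / 2 : ℝ) - 1) * Real.exp (-(b * t)))
      (fun t => Real.exp (-(b * t)) / √t) (Ioi 0) := fun t ht => by
  dsimp only
  rw [show (1 / 2 : ℝ) - 1 = -(1 / 2) by norm_num, Real.rpow_neg (ht.le),
    ← Real.sqrt_eq_rpow, div_eq_inv_mul]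

lemma integrableOn_exp_neg_mul_div_sqrt {b : ℝ} (hb : 0 < b) :
    IntegrableOn (fun t : ℝ => Real.exp (-(b * t)) / √t) (Ioi 0) := by
  refine IntegrableOn.congr_fun ?_ (eqOn_rpow_half_sub_one_mul_exp b) measurableSet_Ioi
  simpa using
    integrableOn_rpow_mul_exp_neg_mul_rpow (s := 1 / 2 - 1) (p := 1) (by norm_num) one_pos hb

lemma integral_exp_neg_mul_div_sqrt {b : ℝ} (hb : 0 < b) :
    ∫ t in Ioi 0, Real.exp (-(b * t)) / √t = √(Real.pi / b) := by
  rw [← setIntegral_congr_fun measurableSet_Ioi (eqOn_rpow_half_sub_one_mul_exp b),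
    Real.integral_rpow_mul_exp_neg_mul_Ioi (by norm_num) hb, Real.Gamma_one_half_eq,
    ← Real.sqrt_eq_rpow, ← Real.sqrt_mul' _ Real.pi_pos.le, one_div_mul_eq_div]

def hankelIntegrand (z : ℂ) (t : ℝ) : ℂ :=
  exp ((I - t) * z) / csqrt ((t : ℂ) ^ 2 - 2 * I * t)

lemma continuousOn_hankelIntegrand (z : ℂ) : ContinuousOn (hankelIntegrand z) (Ioi 0) := by
  refine ContinuousOn.div (by fun_prop) (ContinuousOn.cpow_const (by fun_prop) fun t ht => ?_)
    fun t ht => ?_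
  · exact Or.inr (by rw [im_sq_sub_two_I_mul]; linarith [mem_Ioi.1 ht])
  · exact norm_pos_iff.1 <| (Real.sqrt_pos.2 (by linarith [mem_Ioi.1 ht])).trans_le
      (sqrt_two_mul_le_norm_csqrt (ht.le))

lemma norm_hankelIntegrand_le (z : ℂ) {t : ℝ} (ht : 0 < t) :
    ‖hankelIntegrand z t‖ ≤ ‖exp (I * z)‖ / √2 * (Real.exp (-(z.re * t)) / √t) := by
  rw [hankelIntegrand, norm_div, norm_exp_I_sub_ofReal_mul, div_mul_div_comm,
    ← Real.sqrt_mul zero_le_two]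
  exact div_le_div_of_nonneg_left (by positivity) (by positivity)
    (sqrt_two_mul_le_norm_csqrt ht.le)

lemma two_div_pi_mul_sqrt_pi_div (c : ℝ) {x : ℝ} (hx : 0 < x) :
    2 / Real.pi * (c / √2 * √(Real.pi / x)) = c * √(2 / (Real.pi * x)) := by
  have hπ := Real.pi_pos
  rw [Real.sqrt_div' _ hx.le, Real.sqrt_div' _ (by positivity), Real.sqrt_mul hπ.le]
  field_simp
  rw [Real.sq_sqrt zero_le_two, Real.sq_sqrt hπ.le]
  ring

/-- For `Re z > 0`, the integral representation
`H₀⁽¹⁾(z) = −(2i/π) ∫₀^∞ exp((i−t)z)/√(t²−2it) dt` of the Hankel function of the first kind of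
order zero converges absolutely and `|H₀⁽¹⁾(z)| ≤ |exp(iz)|·√(2/(π·Re z))`. -/
theorem hankel_zero_bound (z : ℂ) (hz : 0 < z.re) :
    IntegrableOn
      (fun t : ℝ => Complex.exp ((Complex.I - (t : ℂ)) * z) / csqrt ((t : ℂ) ^ 2 - 2 * Complex.I * t))
      (Set.Ioi 0) volume ∧
    ‖((2 : ℂ) / (Real.pi : ℂ)) *
        ∫ t in Set.Ioi (0 : ℝ),
          Complex.exp ((Complex.I - (t : ℂ)) * z) / csqrt ((t : ℂ) ^ 2 - 2 * Complex.I * t)‖ ≤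
      ‖Complex.exp (Complex.I * z)‖ * Real.sqrt (2 / (Real.pi * z.re)) := by
  set c := ‖exp (I * z)‖ / √2
  have hbound : ∀ᵐ t ∂volume.restrict (Ioi 0),
      ‖hankelIntegrand z t‖ ≤ c * (Real.exp (-(z.re * t)) / √t) :=
    ae_restrict_of_forall_mem measurableSet_Ioi fun t ht => norm_hankelIntegrand_le z ht
  have hmajorant := (integrableOn_exp_neg_mul_div_sqrt hz).const_mul c
  have hint : IntegrableOn (hankelIntegrand z) (Ioi 0) :=
    hmajorant.mono' ((continuousOn_hankelIntegrand z).aestronglyMeasurable measurableSet_Ioi) hbound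
  refine ⟨hint, ?_⟩
  calc ‖(2 : ℂ) / Real.pi * ∫ t in Ioi 0, hankelIntegrand z t‖
      = 2 / Real.pi * ‖∫ t in Ioi 0, hankelIntegrand z t‖ := by
        rw [norm_mul, norm_div, norm_real, Real.norm_of_nonneg Real.pi_pos.le]; norm_num
    _ ≤ 2 / Real.pi * ∫ t in Ioi 0, c * (Real.exp (-(z.re * t)) / √t) := by
        gcongr
        exact norm_integral_le_of_norm_le hmajorant hbound
    _ = ‖exp (I * z)‖ * √(2 / (Real.pi * z.re)) := by
        rw [integral_const_mul, integral_exp_neg_mul_div_sqrt hz, two_div_pi_mul_sqrt_pi_div _ hz]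
end
end
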